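/- Let k be an odd number. Then for no function f : ℕ → ℕ and positive integer c can the family Ψ'_{n,k} (n even, n ≥ k) be refuted in Resolution in size f(k)·n^c; that is, for every f and c there exist odd k and even n such that every Resolution refutation of Ψ'_{n,k} has size greater than f(k)·n^c. Consequently, embedded W[1]-parameterized Resolution is not fpt-bounded. (Lemma 6 / Lemma in Section 3.3 and its Corollary.) -/

import Mathlib

/-- A clause is a finite set of literals; a literal is a pair (variable, polarity). -/
abbrev Clause (V : Type) := Finset (V × Bool)

/-- An assignment satisfies a clause if it makes some literal of the clause true. -/
def satClause {V : Type} (α : V → Bool) (C : Clause V) : Prop :=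
  ∃ l ∈ C, α l.1 = l.2

/-- An assignment satisfies a CNF (a set of clauses) if it satisfies every clause. -/
def satCNF {V : Type} (α : V → Bool) (F : Set (Clause V)) : Prop :=
  ∀ C ∈ F, satClause α C

/-- A Resolution refutation of a set `F` of clauses: a finite sequence of clauses ending in
the empty clause, each clause being an axiom of `F`, a resolvent of two earlier clauses
(from `P ∨ x` and `Q ∨ ¬x` derive `P ∨ Q`), or a weakening of an earlier clause
(from `P` derive `P ∨ l`). Its size is the length of the sequence. -/
structure ResRefutation {V : Type} [DecidableEq V] (F : Set (Clause V)) where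
  seq : List (Clause V)
  ne : seq ≠ []
  lastEmpty : seq.getLast ne = (∅ : Clause V)
  valid : ∀ i (hi : i < seq.length),
    (seq[i]'hi ∈ F) ∨
    (∃ (j l : ℕ) (hj : j < i) (hl : l < i) (x : V) (P Q : Clause V),
      seq[j]'(hj.trans hi) = insert (x, true) P ∧
      seq[l]'(hl.trans hi) = insert (x, false) Q ∧
      seq[i]'hi = P ∪ Q) ∨
    (∃ (j : ℕ) (hj : j < i) (lit : V × Bool),
      seq[i]'hi = insert lit (seq[j]'(hj.trans hi)))

/-- The size of a Resolution refutation: the length of its sequence of clauses. -/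
def ResRefutation.size {V : Type} [DecidableEq V] {F : Set (Clause V)}
    (π : ResRefutation F) : ℕ :=
  π.seq.length

/-- Tree-Resolution derivations from the clause set `F`: each clause occurrence is used as a
premise of at most one inference. A tree-Resolution refutation of `F` is a `ResTree F ∅`. -/
inductive ResTree {V : Type} [DecidableEq V] (F : Set (Clause V)) : Clause V → Type where
  | ax (C : Clause V) (h : C ∈ F) : ResTree F C
  | res (x : V) (P Q : Clause V) (t₁ : ResTree F (insert (x, true) P))
      (t₂ : ResTree F (insert (x, false) Q)) : ResTree F (P ∪ Q)
  | weak (l : V × Bool) (C : Clause V) (t : ResTree F C) : ResTree F (insert l C)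

/-- The size of a tree-Resolution derivation: its number of clause occurrences. -/
def ResTree.size {V : Type} [DecidableEq V] {F : Set (Clause V)} :
    ∀ {C : Clause V}, ResTree F C → ℕ
  | _, .ax _ _ => 1
  | _, .res _ _ _ t₁ t₂ => t₁.size + t₂.size + 1
  | _, .weak _ _ t => t.size + 1

/-- The clauses `¬x_{i₁} ∨ ⋯ ∨ ¬x_{i_{k+1}}` over the variables in `Vars`. -/
def negClausesOn {V : Type} [DecidableEq V] (Vars : Finset V) (k : ℕ) : Set (Clause V) :=
  {C | ∃ S : Finset V, S ⊆ Vars ∧ S.card = k + 1 ∧ C = S.image (fun v => (v, false))}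

/-- The clauses `x_{i₁} ∨ ⋯ ∨ x_{i_{n-k+1}}` over the `n` variables in `Vars`. -/
def posClausesOn {V : Type} [DecidableEq V] (Vars : Finset V) (k : ℕ) : Set (Clause V) :=
  {C | ∃ S : Finset V, S ⊆ Vars ∧ S.card = Vars.card - k + 1 ∧ C = S.image (fun v => (v, true))}

/-- The weight of an assignment: the number of the `n` variables set to true. -/
def weight (n : ℕ) (α : ℕ → Bool) : ℕ :=
  ((Finset.range n).filter (fun i => α i = true)).card
/-- `Θ_{m,k}`: the CNF in the `n = m(k+1)` variables `v^j_i = m*i + j` (`i < k+1`, `j < m`),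
with the `k+1` clauses `v^1_i ∨ ⋯ ∨ v^m_i`. -/
def Theta (m k : ℕ) : Set (Clause ℕ) :=
  {C | ∃ i, i < k + 1 ∧ C = (Finset.range m).image (fun j => (m * i + j, true))}

/-- `Γ_Θ`: the `m^{k+1}` clauses `¬v^{a_1}_1 ∨ ⋯ ∨ ¬v^{a_{k+1}}_{k+1}` with `a_i ∈ [m]`. -/
def GammaTheta (m k : ℕ) : Set (Clause ℕ) :=
  {C | ∃ a : ℕ → ℕ, (∀ i, i < k + 1 → a i < m) ∧
    C = (Finset.range (k + 1)).image (fun i => (m * i + a i, false))}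

/-- `Ψ_{n,k}` (for `n` even): the CNF in variables `v_0, …, v_{n-1}` with clauses
`v_{2i} ∨ ¬v_{2i+1}` and `v_{2i+1} ∨ ¬v_{2i}` (i.e. `v_{2i} ↔ v_{2i+1}`). -/
def Psi (n : ℕ) : Set (Clause ℕ) :=
  {C | ∃ i, 2 * i + 1 < n ∧
    (C = {(2 * i, true), (2 * i + 1, false)} ∨ C = {(2 * i + 1, true), (2 * i, false)})}

/-- `Γ_Ψ` (for `k` odd): the `binom(n/2, (k+1)/2)` clauses
`¬v_{2a_1} ∨ ¬v_{2a_1+1} ∨ ⋯ ∨ ¬v_{2a_{(k+1)/2}} ∨ ¬v_{2a_{(k+1)/2}+1}` over sets `A` of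
`(k+1)/2` pairs. -/
def GammaPsi (n k : ℕ) : Set (Clause ℕ) :=
  {C | ∃ A : Finset ℕ, A ⊆ Finset.range (n / 2) ∧ A.card = (k + 1) / 2 ∧
    C = (A.biUnion (fun a => ({2 * a, 2 * a + 1} : Finset ℕ))).image (fun v => (v, false))}
/-- Variables of the embedded CNF: original variables `x_i`, pigeonhole variables
`r_{x_i,j}` and `s_{x_i,j}`. -/
abbrev EV : Type := ℕ ⊕ (ℕ × ℕ ⊕ ℕ × ℕ)

def xvar (i : ℕ) : EV := Sum.inl i
def rvar (i j : ℕ) : EV := Sum.inr (Sum.inl (i, j))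
def svar (i j : ℕ) : EV := Sum.inr (Sum.inr (i, j))

/-- The embedded CNF `Φ'` of `(Φ, k)` (for `Φ` a CNF in the variables `x_0, …, x_{n-1}`):
`Φ` together with the pigeonhole clauses
`¬x_i ∨ r_{x_i,1} ∨ ⋯ ∨ r_{x_i,k}`, `¬x_i ∨ ¬r_{x_i,j} ∨ ¬r_{x_l,j}` (`i ≠ l`, `j < k`),
`x_i ∨ s_{x_i,1} ∨ ⋯ ∨ s_{x_i,n-k}`, and `x_i ∨ ¬s_{x_i,j} ∨ ¬s_{x_l,j}` (`i ≠ l`, `j < n-k`). -/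
def EmbeddedCNF (Φ : Set (Clause ℕ)) (n k : ℕ) : Set (Clause EV) :=
  {C | ∃ D ∈ Φ, C = D.image (fun l => (xvar l.1, l.2))} ∪
  {C | ∃ i, i < n ∧
    C = insert (xvar i, false) ((Finset.range k).image (fun j => (rvar i j, true)))} ∪
  {C | ∃ i l j, i < n ∧ l < n ∧ i ≠ l ∧ j < k ∧
    C = {(xvar i, false), (rvar i j, false), (rvar l j, false)}} ∪
  {C | ∃ i, i < n ∧
    C = insert (xvar i, true) ((Finset.range (n - k)).image (fun j => (svar i j, true)))} ∪
  {C | ∃ i l j, i < n ∧ l < n ∧ i ≠ l ∧ j < n - k ∧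
    C = {(xvar i, true), (svar i j, false), (svar l j, false)}}

/-!
For odd `H = n - k`, the assignment that makes exactly the `x_i` with `i > H` true satisfies
`Ψ_{n,k}` (no pair `v_{2i}, v_{2i+1}` is split by `H`), and its `k - 1` true variables fit
injectively into the `k` holes `r_{·,j}`. Near such assignments a refutation of `Ψ'_{n,k}` has to
refute the pigeonhole principle sending the `H + 1` false variables `x_0, …, x_H` injectively to
the `H` holes `s_{·,j}`, and Haken's bottleneck argument in the form of Beame and Pitassi applies.
Call critical the assignments given by a bijection from the holes onto all pigeons but one. A
clause falsified by the critical assignments of between a third and two thirds of the free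
pigeons mentions a constant fraction of the free pigeon–hole pairs; such a clause exists in every
refutation, also after restricting by a partial matching. Greedily matching the pair mentioned by
the most such fat clauses satisfies a fourteenth of them, so `H / 3` rounds show that a refutation
has at least `(14/13)^(H/3)` clauses: exponential in `n` for fixed `k`, hence eventually larger
than `f(k) n^c`.
-/

open Finset

lemma satClause.mono {V : Type} {α : V → Bool} {C D : Clause V} (h : C ⊆ D) (hC : satClause α C) :
    satClause α D :=
  let ⟨l, hl, hαl⟩ := hC
  ⟨l, h hl, hαl⟩

section Resolution

variable {V : Type} [DecidableEq V]

lemma satClause_union_of_resolve {α : V → Bool} {x : V} {P Q : Clause V}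
    (hP : satClause α (insert (x, true) P)) (hQ : satClause α (insert (x, false) Q)) :
    satClause α (P ∪ Q) := by
  obtain ⟨l, hl, hαl⟩ := hP
  obtain ⟨l', hl', hαl'⟩ := hQ
  rcases mem_insert.1 hl with rfl | hl
  · rcases mem_insert.1 hl' with rfl | hl'
    · simp_all
    · exact ⟨l', mem_union_right _ hl', hαl'⟩
  · exact ⟨l, mem_union_left _ hl, hαl⟩

/-- The first clause on which `μ` reaches `T / 3` is not an axiom, and its premises lie below
`T / 3`. -/
theorem ResRefutation.exists_mem_medium {F : Set (Clause V)} (π : ResRefutation F)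
    (μ : Clause V → ℕ) {T : ℕ} (hax : ∀ C ∈ F, 3 * μ C < T)
    (hres : ∀ x P Q, μ (P ∪ Q) ≤ μ (insert (x, true) P) + μ (insert (x, false) Q))
    (hweak : ∀ l C, μ (insert l C) ≤ μ C) (hempty : T ≤ 3 * μ ∅) :
    ∃ C ∈ π.seq, T ≤ 3 * μ C ∧ 3 * μ C ≤ 2 * T := by
  have hex : ∃ i, ∃ hi : i < π.seq.length, T ≤ 3 * μ π.seq[i] := by
    refine ⟨π.seq.length - 1, by simp [List.length_pos_iff, π.ne], ?_⟩
    rwa [← List.getLast_eq_getElem π.ne, π.lastEmpty]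
  obtain ⟨hi, hlarge⟩ := Nat.find_spec hex
  have hsmall : ∀ j (hj : j < Nat.find hex), 3 * μ (π.seq[j]'(hj.trans hi)) < T :=
    fun j hj => lt_of_not_ge fun h => Nat.find_min hex hj ⟨_, h⟩
  refine ⟨_, List.getElem_mem hi, hlarge, ?_⟩
  rcases π.valid _ hi with hF | ⟨j, l, hj, hl, x, P, Q, hjP, hlQ, hPQ⟩ | ⟨j, hj, lit, hlit⟩
  · exact absurd hlarge (not_le.2 (hax _ hF))
  · have h₁ := hsmall j hj
    have h₂ := hsmall l hl
    rw [hjP] at h₁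
    rw [hlQ] at h₂
    rw [hPQ]
    have := hres x P Q
    omega
  · have h₁ := hsmall j hj
    rw [hlit]
    have := hweak lit (π.seq[j]'(hj.trans hi))
    omega

end Resolution

lemma Finset.exists_card_le_mul_card_filter_mem {α β : Type*} [DecidableEq β] {S : Finset α}
    {grid : Finset β} {A : α → Finset β} {d : ℕ} (hgrid : grid.Nonempty)
    (hA : ∀ a ∈ S, A a ⊆ grid) (hd : ∀ a ∈ S, #grid ≤ d * #(A a)) :
    ∃ c ∈ grid, #S ≤ d * #{a ∈ S | c ∈ A a} := by
  refine exists_le_of_sum_le hgrid ?_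
  have hcount : ∑ a ∈ S, #(A a) = ∑ c ∈ grid, #{a ∈ S | c ∈ A a} :=
    calc ∑ a ∈ S, #(A a) = ∑ a ∈ S, #(grid.bipartiteAbove (fun a c => c ∈ A a) a) :=
          sum_congr rfl fun a ha => by
            rw [bipartiteAbove, filter_mem_eq_inter, inter_eq_right.2 (hA a ha)]
      _ = _ := sum_card_bipartiteAbove_eq_sum_card_bipartiteBelow _
  calc ∑ _c ∈ grid, #S = ∑ _a ∈ S, #grid := by simp [mul_comm]
    _ ≤ ∑ a ∈ S, d * #(A a) := sum_le_sum hd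
    _ = ∑ c ∈ grid, d * #{a ∈ S | c ∈ A a} := by rw [← mul_sum, ← mul_sum, hcount]

lemma eventually_mul_pow_mul_pow_lt {a b : ℕ} (hab : a < b) (A c : ℕ) :
    ∀ᶠ q : ℕ in Filter.atTop, A * q ^ c * a ^ q < b ^ q := by
  have h := ((isLittleO_pow_const_mul_const_pow_const_pow_of_norm_lt (R := ℝ) c
    (r₁ := a) (r₂ := b) (by simpa using hab)).const_mul_left (A : ℝ)).def (c := 1 / 2)
    (by norm_num)
  filter_upwards [h] with q hq
  have hb : (0 : ℝ) < b ^ q := pow_pos (Nat.cast_pos.2 (by omega)) q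
  simp only [norm_mul, norm_pow, Real.norm_natCast] at hq
  have : (A * q ^ c * a ^ q : ℝ) < b ^ q := by
    rw [← mul_assoc] at hq
    linarith
  exact_mod_cast this

namespace PHPLowerBound

open scoped Classical

variable {H : ℕ}

/-- The critical assignments of the pigeonhole principle with pigeons `x_0, …, x_H` (the false
`x`-variables) and holes `s_{·,0}, …, s_{·,H-1}`: `β j` is the pigeon in hole `j`, and each true
variable `x_i`, `i > H`, sits in the `r`-hole `i - (H + 1)`. -/
def critAsg (H : ℕ) (β : ℕ → ℕ) : EV → Bool
  | Sum.inl i => decide (H < i)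
  | Sum.inr (Sum.inl (i, j)) => decide (H < i ∧ j + (H + 1) = i)
  | Sum.inr (Sum.inr (i, j)) => decide (j < H ∧ β j = i)

@[simp] lemma critAsg_xvar (β : ℕ → ℕ) (i : ℕ) : critAsg H β (xvar i) = decide (H < i) := rfl

@[simp] lemma critAsg_rvar (β : ℕ → ℕ) (i j : ℕ) :
    critAsg H β (rvar i j) = decide (H < i ∧ j + (H + 1) = i) := rfl

@[simp] lemma critAsg_svar (β : ℕ → ℕ) (i j : ℕ) :
    critAsg H β (svar i j) = decide (j < H ∧ β j = i) := rfl

structure IsMatching (H : ℕ) (M : Finset (ℕ × ℕ)) : Prop where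
  le_of_mem : ∀ e ∈ M, e.1 ≤ H ∧ e.2 < H
  injOn_fst : Set.InjOn Prod.fst (M : Set (ℕ × ℕ))
  injOn_snd : Set.InjOn Prod.snd (M : Set (ℕ × ℕ))

def freePigeons (H : ℕ) (M : Finset (ℕ × ℕ)) : Finset ℕ := range (H + 1) \ M.image Prod.fst

def freeHoles (H : ℕ) (M : Finset (ℕ × ℕ)) : Finset ℕ := range H \ M.image Prod.snd

structure IsCritical (H : ℕ) (M : Finset (ℕ × ℕ)) (p : ℕ) (β : ℕ → ℕ) : Prop where
  mem_freePigeons : p ∈ freePigeons H M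
  mapsTo : Set.MapsTo β (range H) ((range (H + 1)).erase p)
  injOn : Set.InjOn β (range H)
  apply_snd : ∀ e ∈ M, β e.2 = e.1

lemma freePigeons_anti {M M' : Finset (ℕ × ℕ)} (h : M ⊆ M') :
    freePigeons H M' ⊆ freePigeons H M :=
  sdiff_subset_sdiff le_rfl (image_subset_image h)

lemma freeHoles_anti {M M' : Finset (ℕ × ℕ)} (h : M ⊆ M') : freeHoles H M' ⊆ freeHoles H M :=
  sdiff_subset_sdiff le_rfl (image_subset_image h)

lemma card_freePigeons {M : Finset (ℕ × ℕ)} (hM : IsMatching H M) :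
    #(freePigeons H M) = H + 1 - #M := by
  rw [freePigeons, card_sdiff_of_subset, card_range, card_image_of_injOn hM.injOn_fst]
  intro i hi
  obtain ⟨e, he, rfl⟩ := mem_image.1 hi
  exact mem_range.2 (Nat.lt_succ_of_le (hM.le_of_mem e he).1)

lemma IsMatching.insert {M : Finset (ℕ × ℕ)} (hM : IsMatching H M) {p j : ℕ}
    (hp : p ∈ freePigeons H M) (hj : j ∈ freeHoles H M) : IsMatching H (insert (p, j) M) := by
  simp only [freePigeons, freeHoles, mem_sdiff, mem_range, mem_image] at hp hj
  refine ⟨?_, ?_, ?_⟩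
  · simp only [mem_insert, forall_eq_or_imp]
    exact ⟨⟨by omega, hj.1⟩, hM.le_of_mem⟩
  · rw [coe_insert, Set.injOn_insert fun h => hp.2 ⟨(p, j), h, rfl⟩]
    exact ⟨hM.injOn_fst, fun ⟨e, he, hep⟩ => hp.2 ⟨e, he, hep⟩⟩
  · rw [coe_insert, Set.injOn_insert fun h => hj.2 ⟨(p, j), h, rfl⟩]
    exact ⟨hM.injOn_snd, fun ⟨e, he, hej⟩ => hj.2 ⟨e, he, hej⟩⟩

namespace IsCritical

variable {M : Finset (ℕ × ℕ)} {p : ℕ} {β : ℕ → ℕ}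

lemma anti {M' : Finset (ℕ × ℕ)} (hMM' : M ⊆ M') (h : IsCritical H M' p β) :
    IsCritical H M p β :=
  ⟨freePigeons_anti hMM' h.mem_freePigeons, h.mapsTo, h.injOn, fun e he => h.apply_snd e (hMM' he)⟩

lemma exists_apply_eq (h : IsCritical H M p β) {i : ℕ} (hi : i ≤ H) (hip : i ≠ p) :
    ∃ j < H, β j = i := by
  have hp : p ∈ range (H + 1) := (mem_sdiff.1 h.mem_freePigeons).1
  obtain ⟨j, hj, hji⟩ := surjOn_of_injOn_of_card_le β h.mapsTo h.injOn
    (by rw [card_erase_of_mem hp, card_range, card_range, Nat.add_sub_cancel])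
    (mem_erase.2 ⟨hip, mem_range.2 (Nat.lt_succ_of_le hi)⟩)
  exact ⟨j, mem_range.1 hj, hji⟩

lemma mem_freeHoles_of_apply_mem (h : IsCritical H M p β) {j : ℕ} (hj : j < H)
    (hβj : β j ∈ freePigeons H M) : j ∈ freeHoles H M := by
  refine mem_sdiff.2 ⟨mem_range.2 hj, fun hjM => ?_⟩
  obtain ⟨e, he, rfl⟩ := mem_image.1 hjM
  exact (mem_sdiff.1 hβj).2 (mem_image.2 ⟨e, he, (h.apply_snd e he).symm⟩)

lemma update (h : IsCritical H M p β) {j : ℕ} (hj : j < H) (hq : β j ∈ freePigeons H M) :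
    IsCritical H M (β j) (Function.update β j p) := by
  have hβj := mem_erase.1 (h.mapsTo (mem_coe.2 (mem_range.2 hj)))
  have hp := (mem_sdiff.1 h.mem_freePigeons).1
  have hne : ∀ j' < H, j' ≠ j → β j' ≠ β j := fun j' hj' hj'j hβ =>
    hj'j (h.injOn (mem_coe.2 (mem_range.2 hj')) (mem_coe.2 (mem_range.2 hj)) hβ)
  refine ⟨hq, fun j' hj' => ?_, fun j₁ hj₁ j₂ hj₂ hβ => ?_, fun e he => ?_⟩
  · have hj'H := mem_range.1 (mem_coe.1 hj')
    rcases eq_or_ne j' j with rfl | hj'j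
    · rw [Function.update_self]
      exact mem_erase.2 ⟨Ne.symm hβj.1, hp⟩
    · rw [Function.update_of_ne hj'j]
      exact mem_erase.2 ⟨hne j' hj'H hj'j, (mem_erase.1 (h.mapsTo hj')).2⟩
  · by_cases h₁ : j₁ = j <;> by_cases h₂ : j₂ = j
    · rw [h₁, h₂]
    · rw [h₁, Function.update_self, Function.update_of_ne h₂] at hβ
      exact absurd hβ.symm (mem_erase.1 (h.mapsTo hj₂)).1
    · rw [h₂, Function.update_self, Function.update_of_ne h₁] at hβ
      exact absurd hβ (mem_erase.1 (h.mapsTo hj₁)).1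
    · rw [Function.update_of_ne h₁, Function.update_of_ne h₂] at hβ
      exact h.injOn hj₁ hj₂ hβ
  · have he₂ : e.2 ≠ j := by
      rintro rfl
      exact (mem_sdiff.1 (h.mem_freeHoles_of_apply_mem hj hq)).2 (mem_image.2 ⟨e, he, rfl⟩)
    rw [Function.update_of_ne he₂]
    exact h.apply_snd e he

end IsCritical

noncomputable def matchedPigeon (M : Finset (ℕ × ℕ)) (j : ℕ) : ℕ :=
  (Function.invFunOn Prod.snd (M : Set (ℕ × ℕ)) j).1

lemma matchedPigeon_mem {M : Finset (ℕ × ℕ)} {j : ℕ} (hj : j ∈ M.image Prod.snd) :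
    (matchedPigeon M j, j) ∈ M := by
  obtain ⟨e, he, hej⟩ := mem_image.1 hj
  have hex : ∃ e ∈ (M : Set (ℕ × ℕ)), e.2 = j := ⟨e, he, hej⟩
  have hpair : (matchedPigeon M j, j) = Function.invFunOn Prod.snd (M : Set (ℕ × ℕ)) j :=
    Prod.ext rfl (Function.invFunOn_eq hex).symm
  rw [hpair]
  exact Function.invFunOn_mem hex

lemma IsMatching.matchedPigeon_snd {M : Finset (ℕ × ℕ)} (hM : IsMatching H M) {e : ℕ × ℕ}
    (he : e ∈ M) : matchedPigeon M e.2 = e.1 :=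
  (Prod.ext_iff.1 (hM.injOn_snd (matchedPigeon_mem (mem_image_of_mem _ he)) he rfl)).1

lemma exists_isCritical {M : Finset (ℕ × ℕ)} (hM : IsMatching H M) {p : ℕ}
    (hp : p ∈ freePigeons H M) : ∃ β, IsCritical H M p β := by
  have hp' := mem_sdiff.1 hp
  obtain ⟨g, hg⟩ := exists_equiv_extend_of_card_eq
    (s := {j : Fin H | (j : ℕ) ∈ M.image Prod.snd}) (f := fun j => matchedPigeon M j)
    (t := (range (H + 1)).erase p)
    (by rw [Fintype.card_fin, card_erase_of_mem hp'.1, card_range, Nat.add_sub_cancel])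
    (by
      intro i hi
      obtain ⟨j, hj, rfl⟩ := mem_image.1 hi
      have hmem := matchedPigeon_mem (mem_filter.1 hj).2
      refine mem_erase.2 ⟨fun h => hp'.2 (mem_image.2 ⟨_, hmem, h⟩), ?_⟩
      exact mem_range.2 (Nat.lt_succ_of_le (hM.le_of_mem _ hmem).1))
    (by
      intro j₁ hj₁ j₂ hj₂ h
      have hmem₁ := matchedPigeon_mem (mem_filter.1 hj₁).2
      have hmem₂ := matchedPigeon_mem (mem_filter.1 hj₂).2
      exact Fin.ext (congrArg Prod.snd (hM.injOn_fst hmem₁ hmem₂ h)))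
  refine ⟨fun j => if h : j < H then g ⟨j, h⟩ else 0, hp, ?_, ?_, ?_⟩
  · intro j hj
    have hj' : j < H := mem_range.1 (mem_coe.1 hj)
    simp only [mem_coe, dif_pos hj']
    exact (g ⟨j, hj'⟩).2
  · intro j₁ hj₁ j₂ hj₂ h
    have h₁ : j₁ < H := mem_range.1 (mem_coe.1 hj₁)
    have h₂ : j₂ < H := mem_range.1 (mem_coe.1 hj₂)
    simp only [dif_pos h₁, dif_pos h₂] at h
    exact congrArg Fin.val (g.injective (Subtype.ext h))
  · intro e he
    have he₂ : e.2 < H := (hM.le_of_mem e he).2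
    simp only [dif_pos he₂]
    rw [hg ⟨e.2, he₂⟩ (mem_filter.2 ⟨mem_univ _, mem_image.2 ⟨e, he, rfl⟩⟩)]
    exact hM.matchedPigeon_snd he

noncomputable def falsifyingPigeons (H : ℕ) (M : Finset (ℕ × ℕ)) (C : Clause EV) : Finset ℕ :=
  {p ∈ freePigeons H M | ∃ β, IsCritical H M p β ∧ ¬ satClause (critAsg H β) C}

def pigeonClause (H p : ℕ) : Clause EV :=
  insert (xvar p, true) ((range H).image fun j => (svar p j, true))

lemma pigeonClause_injective : Function.Injective (pigeonClause H) := by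
  intro p q h
  have hp : (xvar p, true) ∈ pigeonClause H q := h ▸ mem_insert_self _ _
  simpa [pigeonClause, xvar, svar] using hp

section Measure

variable {M : Finset (ℕ × ℕ)}

lemma falsifyingPigeons_subset_freePigeons (C : Clause EV) :
    falsifyingPigeons H M C ⊆ freePigeons H M :=
  filter_subset _ _

lemma falsifyingPigeons_anti {M' : Finset (ℕ × ℕ)} (h : M ⊆ M') (C : Clause EV) :
    falsifyingPigeons H M' C ⊆ falsifyingPigeons H M C := by
  intro p hp
  obtain ⟨hp, β, hβ, hC⟩ := mem_filter.1 hp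
  exact mem_filter.2 ⟨freePigeons_anti h hp, β, hβ.anti h, hC⟩

lemma falsifyingPigeons_anti_clause {C D : Clause EV} (h : C ⊆ D) :
    falsifyingPigeons H M D ⊆ falsifyingPigeons H M C := by
  intro p hp
  obtain ⟨hp, β, hβ, hD⟩ := mem_filter.1 hp
  exact mem_filter.2 ⟨hp, β, hβ, fun hC => hD (hC.mono h)⟩

lemma falsifyingPigeons_union_subset (x : EV) (P Q : Clause EV) :
    falsifyingPigeons H M (P ∪ Q) ⊆
      falsifyingPigeons H M (insert (x, true) P) ∪ falsifyingPigeons H M (insert (x, false) Q) := by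
  intro p hp
  obtain ⟨hp, β, hβ, hPQ⟩ := mem_filter.1 hp
  by_contra hpPQ
  simp only [mem_union, falsifyingPigeons, mem_filter, not_or, not_and, not_exists,
    not_not] at hpPQ
  exact hPQ (satClause_union_of_resolve (hpPQ.1 hp β hβ) (hpPQ.2 hp β hβ))

lemma falsifyingPigeons_empty (hM : IsMatching H M) : falsifyingPigeons H M ∅ = freePigeons H M :=
  filter_true_of_mem fun _ hp =>
    let ⟨β, hβ⟩ := exists_isCritical hM hp
    ⟨β, hβ, fun ⟨_, hl, _⟩ => notMem_empty _ hl⟩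

lemma eq_pigeonClause_of_not_satClause {Φ : Set (Clause ℕ)} {n k : ℕ}
    (hΦ : satCNF (fun i => decide (n - k < i)) Φ) {p : ℕ} {β : ℕ → ℕ}
    (hβ : IsCritical (n - k) M p β) {C : Clause EV} (hC : C ∈ EmbeddedCNF Φ n k)
    (hfalse : ¬ satClause (critAsg (n - k) β) C) : C = pigeonClause (n - k) p := by
  have hfal : ∀ l ∈ C, critAsg (n - k) β l.1 ≠ l.2 := fun l hl hlC => hfalse ⟨l, hl, hlC⟩
  rcases hC with ((((⟨D, hD, rfl⟩ | ⟨i, hi, rfl⟩) | ⟨i, l, j, hi, hl, hil, hj, rfl⟩) |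
      ⟨i, hi, rfl⟩) | ⟨i, l, j, hi, hl, hil, hj, rfl⟩)
  · obtain ⟨l, hl, hαl⟩ := hΦ D hD
    exact absurd hαl (hfal _ (mem_image_of_mem _ hl))
  · have hi' : n - k < i := by simpa using hfal _ (mem_insert_self _ _)
    refine absurd ?_ (hfal (rvar i (i - (n - k + 1)), true)
      (mem_insert_of_mem (mem_image.2 ⟨_, mem_range.2 (by omega), rfl⟩)))
    simp only [critAsg_rvar, decide_eq_true_eq]
    omega
  · have hi' : n - k < i := by simpa using hfal (xvar i, false) (by simp)
    have hri := hfal (rvar i j, false) (by simp)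
    have hrl := hfal (rvar l j, false) (by simp)
    simp only [critAsg_rvar, ne_eq, decide_eq_false_iff_not, not_not] at hri hrl
    omega
  · have hx := hfal _ (mem_insert_self _ _)
    simp only [critAsg_xvar, ne_eq, decide_eq_true_eq, not_lt] at hx
    by_contra hip
    obtain ⟨j, hj, hβj⟩ := hβ.exists_apply_eq hx (fun h => hip (by rw [h]; rfl))
    exact hfal (svar i j, true) (mem_insert_of_mem (mem_image_of_mem _ (mem_range.2 hj)))
      (by simp [hj, hβj])
  · have hsi := hfal (svar i j, false) (by simp)
    have hsl := hfal (svar l j, false) (by simp)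
    simp only [critAsg_svar, ne_eq, decide_eq_false_iff_not, not_not] at hsi hsl
    exact absurd (hsi.2.symm.trans hsl.2) hil

lemma card_falsifyingPigeons_le_one {Φ : Set (Clause ℕ)} {n k : ℕ}
    (hΦ : satCNF (fun i => decide (n - k < i)) Φ) {C : Clause EV}
    (hC : C ∈ EmbeddedCNF Φ n k) : #(falsifyingPigeons (n - k) M C) ≤ 1 := by
  refine card_le_one.2 fun p hp q hq => pigeonClause_injective (H := n - k) ?_
  obtain ⟨-, β, hβ, hpC⟩ := mem_filter.1 hp
  obtain ⟨-, γ, hγ, hqC⟩ := mem_filter.1 hq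
  rw [← eq_pigeonClause_of_not_satClause hΦ hβ hC hpC,
    eq_pigeonClause_of_not_satClause hΦ hγ hC hqC]

end Measure

/-- The pairs `(p, j)` mentioned by the monotone form of `C`, in which `¬s_{l,j}` reads
`⋁_{l' ≠ l} s_{l',j}`: matching `p` to hole `j` satisfies `C`. -/
noncomputable def monotonePairs (H : ℕ) (M : Finset (ℕ × ℕ)) (C : Clause EV) : Finset (ℕ × ℕ) :=
  {e ∈ freePigeons H M ×ˢ freeHoles H M |
    (svar e.1 e.2, true) ∈ C ∨ ∃ l ∈ freePigeons H M, l ≠ e.1 ∧ (svar l e.2, false) ∈ C}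

section MonotonePairs

variable {M : Finset (ℕ × ℕ)} {C : Clause EV}

lemma monotonePairs_subset : monotonePairs H M C ⊆ freePigeons H M ×ˢ freeHoles H M :=
  filter_subset _ _

lemma monotonePairs_anti {M' : Finset (ℕ × ℕ)} (h : M ⊆ M') :
    monotonePairs H M' C ⊆ monotonePairs H M C := by
  intro e he
  simp only [monotonePairs, mem_filter, mem_product] at he ⊢
  obtain ⟨⟨hp, hj⟩, hpos | ⟨l, hl, hle, hneg⟩⟩ := he
  · exact ⟨⟨freePigeons_anti h hp, freeHoles_anti h hj⟩, Or.inl hpos⟩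
  · exact ⟨⟨freePigeons_anti h hp, freeHoles_anti h hj⟩,
      Or.inr ⟨l, freePigeons_anti h hl, hle, hneg⟩⟩

lemma falsifyingPigeons_insert_eq_empty {e : ℕ × ℕ} (he : e ∈ monotonePairs H M C) :
    falsifyingPigeons H (insert e M) C = ∅ := by
  refine filter_false_of_mem fun p _ ⟨β, hβ, hC⟩ => hC ?_
  have hβe := hβ.apply_snd e (mem_insert_self _ _)
  simp only [monotonePairs, mem_filter, mem_product] at he
  obtain ⟨⟨-, hj⟩, hpos | ⟨l, -, hle, hneg⟩⟩ := he
  · exact ⟨_, hpos, by simpa using ⟨(mem_range.1 (mem_sdiff.1 hj).1), hβe⟩⟩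
  · exact ⟨_, hneg, by simpa [hβe] using fun _ => Ne.symm hle⟩

/-- Moving hole `j` from the pigeon `β j`, all of whose critical assignments satisfy `C`, to the
missing pigeon `p` satisfies `C`; only the variables `s_{·,j}` change. -/
lemma mem_monotonePairs {p : ℕ} {β : ℕ → ℕ} (hβ : IsCritical H M p β)
    (hC : ¬ satClause (critAsg H β) C) {j : ℕ} (hj : j < H)
    (hq : β j ∈ freePigeons H M \ falsifyingPigeons H M C) : (p, j) ∈ monotonePairs H M C := by
  obtain ⟨hqfree, hqsat⟩ := mem_sdiff.1 hq
  have hsat : satClause (critAsg H (Function.update β j p)) C := by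
    by_contra h
    exact hqsat (mem_filter.2 ⟨hqfree, _, hβ.update hj hqfree, h⟩)
  obtain ⟨⟨v, b⟩, hvC, hv⟩ := hsat
  have hv' : critAsg H β v ≠ b := fun h => hC ⟨_, hvC, h⟩
  refine mem_filter.2 ⟨mem_product.2 ⟨hβ.mem_freePigeons,
    hβ.mem_freeHoles_of_apply_mem hj hqfree⟩, ?_⟩
  rcases v with i | ⟨i, j'⟩ | ⟨i, j'⟩
  · exact absurd hv hv'
  · exact absurd hv hv'
  · rcases eq_or_ne j' j with rfl | hj'
    · change critAsg H _ (svar i j') = b at hv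
      change critAsg H _ (svar i j') ≠ b at hv'
      cases b
      · simp only [critAsg_svar, Function.update_self, hj, true_and, ne_eq,
          decide_eq_false_iff_not, not_not] at hv hv'
        exact Or.inr ⟨β j', hqfree, hv' ▸ Ne.symm hv, hv' ▸ hvC⟩
      · simp only [critAsg_svar, Function.update_self, hj, true_and, decide_eq_true_eq] at hv
        exact Or.inl (hv ▸ hvC)
    · change critAsg H _ (svar i j') = b at hv
      rw [critAsg_svar, Function.update_of_ne hj'] at hv
      exact absurd hv hv'

lemma card_sdiff_falsifyingPigeons_le {p : ℕ} (hp : p ∈ falsifyingPigeons H M C) :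
    #(freePigeons H M \ falsifyingPigeons H M C) ≤ #{e ∈ monotonePairs H M C | e.1 = p} := by
  obtain ⟨-, β, hβ, hC⟩ := mem_filter.1 hp
  refine (card_le_card fun q hq => ?_).trans (card_image_le (f := fun e => β e.2))
  obtain ⟨hqfree, hqsat⟩ := mem_sdiff.1 hq
  have hqp : q ≠ p := fun h => hqsat (h ▸ hp)
  have hqH : q ≤ H := Nat.lt_succ_iff.1 (mem_range.1 (mem_sdiff.1 hqfree).1)
  obtain ⟨j, hj, rfl⟩ := hβ.exists_apply_eq hqH hqp
  exact mem_image.2 ⟨(p, j), mem_filter.2 ⟨mem_monotonePairs hβ hC hj hq, rfl⟩, rfl⟩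

lemma card_falsifyingPigeons_mul_le_card_monotonePairs :
    #(falsifyingPigeons H M C) * (#(freePigeons H M) - #(falsifyingPigeons H M C)) ≤
      #(monotonePairs H M C) := by
  have hsub := falsifyingPigeons_subset_freePigeons (H := H) (M := M) C
  rw [← card_sdiff_of_subset hsub, ← smul_eq_mul, ← sum_const,
    card_eq_sum_card_fiberwise fun e he => (mem_product.1 (monotonePairs_subset he)).1]
  exact (sum_le_sum fun p hp => card_sdiff_falsifyingPigeons_le hp).trans
    (sum_le_sum_of_subset hsub)

end MonotonePairs

noncomputable def fatClauses (H : ℕ) (M : Finset (ℕ × ℕ)) (S : Finset (Clause EV)) :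
    Finset (Clause EV) :=
  {C ∈ S | (falsifyingPigeons H M C).Nonempty ∧ (H + 1) * H ≤ 14 * #(monotonePairs H M C)}

section Restriction

variable {S : Finset (Clause EV)}

/-- By double counting some free pair is mentioned by a fourteenth of the fat clauses, and
matching it satisfies them all. -/
lemma exists_isMatching_insert_card_fatClauses_le (hH : 0 < H) {M : Finset (ℕ × ℕ)}
    (hM : IsMatching H M) (hS : (fatClauses H M S).Nonempty) :
    ∃ e ∉ M, IsMatching H (insert e M) ∧
      14 * #(fatClauses H (insert e M) S) ≤ 13 * #(fatClauses H M S) := by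
  have hgrid_card : #(freePigeons H M ×ˢ freeHoles H M) ≤ (H + 1) * H := by
    rw [card_product]
    exact Nat.mul_le_mul ((card_le_card sdiff_subset).trans (card_range _).le)
      ((card_le_card sdiff_subset).trans (card_range _).le)
  have hgrid : (freePigeons H M ×ˢ freeHoles H M).Nonempty := by
    obtain ⟨C, hC⟩ := hS
    have hfat := (mem_filter.1 hC).2.2
    have hpos : 0 < (H + 1) * H := Nat.mul_pos H.succ_pos hH
    obtain ⟨e, he⟩ := card_pos.1 (show 0 < #(monotonePairs H M C) by omega)
    exact ⟨e, monotonePairs_subset he⟩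
  obtain ⟨e, he, hhit⟩ := exists_card_le_mul_card_filter_mem (S := fatClauses H M S)
    (A := monotonePairs H M) hgrid (fun C _ => monotonePairs_subset)
    fun C hC => hgrid_card.trans (mem_filter.1 hC).2.2
  obtain ⟨hp, hj⟩ := mem_product.1 he
  have heM : e ∉ M := fun h => (mem_sdiff.1 hp).2 (mem_image_of_mem _ h)
  refine ⟨e, heM, hM.insert hp hj, ?_⟩
  have hsub : fatClauses H (insert e M) S ⊆
      fatClauses H M S \ {C ∈ fatClauses H M S | e ∈ monotonePairs H M C} := by
    intro C hC
    obtain ⟨hCS, hfalse, hfat⟩ := mem_filter.1 hC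
    refine mem_sdiff.2 ⟨mem_filter.2 ⟨hCS,
      hfalse.mono (falsifyingPigeons_anti (subset_insert _ _) C),
      hfat.trans (Nat.mul_le_mul_left _ (card_le_card (monotonePairs_anti (subset_insert _ _))))⟩,
      fun hhitC => ?_⟩
    rw [falsifyingPigeons_insert_eq_empty (mem_filter.1 hhitC).2] at hfalse
    exact not_nonempty_empty hfalse
  have := card_le_card hsub
  rw [card_sdiff_of_subset (filter_subset _ _)] at this
  omega

lemma exists_isMatching_pow_mul_card_fatClauses_le
    (hS : ∀ M, IsMatching H M → #M ≤ H / 3 → (fatClauses H M S).Nonempty) {t : ℕ}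
    (ht : t ≤ H / 3) :
    ∃ M, IsMatching H M ∧ #M = t ∧ 14 ^ t * #(fatClauses H M S) ≤ 13 ^ t * #S := by
  induction t with
  | zero =>
    refine ⟨∅, ⟨by simp, by simp, by simp⟩, rfl, ?_⟩
    rw [pow_zero, pow_zero, one_mul, one_mul]
    exact card_filter_le _ _
  | succ t ih =>
    obtain ⟨M, hM, rfl, hMS⟩ := ih (by omega)
    obtain ⟨e, heM, hM', hstep⟩ :=
      exists_isMatching_insert_card_fatClauses_le (by omega) hM (hS M hM (by omega))
    refine ⟨insert e M, hM', card_insert_of_notMem heM, ?_⟩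
    calc 14 ^ (#M + 1) * #(fatClauses H (insert e M) S)
        = 14 ^ #M * (14 * #(fatClauses H (insert e M) S)) := by ring
      _ ≤ 14 ^ #M * (13 * #(fatClauses H M S)) := Nat.mul_le_mul_left _ hstep
      _ = 13 * (14 ^ #M * #(fatClauses H M S)) := by ring
      _ ≤ 13 * (13 ^ #M * #S) := Nat.mul_le_mul_left _ hMS
      _ = 13 ^ (#M + 1) * #S := by ring

theorem pow_le_pow_mul_card_of_fatClauses_nonempty
    (hS : ∀ M, IsMatching H M → #M ≤ H / 3 → (fatClauses H M S).Nonempty) :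
    14 ^ (H / 3) ≤ 13 ^ (H / 3) * #S := by
  obtain ⟨M, hM, hMcard, hMS⟩ := exists_isMatching_pow_mul_card_fatClauses_le hS le_rfl
  calc 14 ^ (H / 3) ≤ 14 ^ (H / 3) * #(fatClauses H M S) :=
        Nat.le_mul_of_pos_right _ (card_pos.2 (hS M hM hMcard.le))
    _ ≤ 13 ^ (H / 3) * #S := hMS

end Restriction

lemma le_mul_mul_sub_of_medium {μ T H : ℕ} (hlow : T ≤ 3 * μ) (hhigh : 3 * μ ≤ 2 * T)
    (hT : 2 * H + 3 ≤ 3 * T) : (H + 1) * H ≤ 14 * (μ * (T - μ)) := by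
  have hμT : μ ≤ T := by omega
  zify [hμT] at *
  nlinarith [mul_nonneg (sub_nonneg.2 hlow) (sub_nonneg.2 hhigh)]

lemma fatClauses_nonempty {Φ : Set (Clause ℕ)} {n k : ℕ}
    (hΦ : satCNF (fun i => decide (n - k < i)) Φ) (hH : 4 ≤ n - k)
    (π : ResRefutation (EmbeddedCNF Φ n k)) {M : Finset (ℕ × ℕ)} (hM : IsMatching (n - k) M)
    (hMcard : #M ≤ (n - k) / 3) : (fatClauses (n - k) M π.seq.toFinset).Nonempty := by
  have hT := card_freePigeons hM
  obtain ⟨C, hC, hlow, hhigh⟩ := π.exists_mem_medium (fun C => #(falsifyingPigeons (n - k) M C))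
    (T := #(freePigeons (n - k) M))
    (fun C hC => by have := card_falsifyingPigeons_le_one (M := M) hΦ hC; omega)
    (fun x P Q => (card_le_card (falsifyingPigeons_union_subset x P Q)).trans (card_union_le _ _))
    (fun l C => card_le_card (falsifyingPigeons_anti_clause (subset_insert l C)))
    (by rw [falsifyingPigeons_empty hM]; omega)
  refine ⟨C, mem_filter.2 ⟨List.mem_toFinset.2 hC, card_pos.1 (by omega), ?_⟩⟩
  exact (le_mul_mul_sub_of_medium hlow hhigh (by omega)).trans
    (Nat.mul_le_mul_left _ card_falsifyingPigeons_mul_le_card_monotonePairs)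

theorem pow_le_pow_mul_size {Φ : Set (Clause ℕ)} {n k : ℕ}
    (hΦ : satCNF (fun i => decide (n - k < i)) Φ) (hH : 4 ≤ n - k)
    (π : ResRefutation (EmbeddedCNF Φ n k)) :
    14 ^ ((n - k) / 3) ≤ 13 ^ ((n - k) / 3) * π.size :=
  (pow_le_pow_mul_card_of_fatClauses_nonempty fun _ hM hMcard =>
    fatClauses_nonempty hΦ hH π hM hMcard).trans (Nat.mul_le_mul_left _ (List.toFinset_card_le _))

end PHPLowerBound

lemma satCNF_psi {n H : ℕ} (hH : Odd H) : satCNF (fun i => decide (H < i)) (Psi n) := by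
  have hpair : ∀ i, decide (H < 2 * i + 1) = decide (H < 2 * i) := fun i => by
    obtain ⟨m, rfl⟩ := hH
    simp only [decide_eq_decide]
    omega
  rintro C ⟨i, -, rfl | rfl⟩ <;> cases h : decide (H < 2 * i)
  · exact ⟨(2 * i + 1, false), by simp, (hpair i).trans h⟩
  · exact ⟨(2 * i, true), by simp, h⟩
  · exact ⟨(2 * i, false), by simp, h⟩
  · exact ⟨(2 * i + 1, true), by simp, (hpair i).trans h⟩

theorem embedded_psi_not_fpt_bounded_general (k : ℕ) (hk : Odd k) (f : ℕ → ℕ) (c : ℕ) :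
    ∃ n : ℕ, Even n ∧ k ≤ n ∧
      ∀ π : ResRefutation (EmbeddedCNF (Psi n) n k), f k * n ^ c < π.size := by
  obtain ⟨Q, hQ⟩ := Filter.eventually_atTop.1
    (eventually_mul_pow_mul_pow_lt (by norm_num : 13 < 14) (f k * (k + 3) ^ c) c)
  set q := 2 * (Q + 2) + 1 with hq
  have hodd : Odd (3 * q) := ⟨3 * (Q + 2) + 1, by omega⟩
  have hnk : k + 3 * q - k = 3 * q := Nat.add_sub_cancel_left _ _
  refine ⟨k + 3 * q, hk.add_odd hodd, Nat.le_add_right _ _, fun π => ?_⟩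
  have hsize := PHPLowerBound.pow_le_pow_mul_size (satCNF_psi (by rwa [hnk])) (by omega) π
  rw [hnk, Nat.mul_div_cancel_left _ (by norm_num : 0 < 3)] at hsize
  have hn : (k + 3 * q) ^ c ≤ (k + 3) ^ c * q ^ c := by
    rw [← mul_pow]
    exact Nat.pow_le_pow_left (by nlinarith) c
  refine lt_of_mul_lt_mul_left (a := 13 ^ q) ?_ (Nat.zero_le _)
  calc 13 ^ q * (f k * (k + 3 * q) ^ c) ≤ 13 ^ q * (f k * ((k + 3) ^ c * q ^ c)) := by gcongr
    _ = f k * (k + 3) ^ c * q ^ c * 13 ^ q := by ring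
    _ < 14 ^ q := hQ q (by omega)
    _ ≤ 13 ^ q * π.size := hsize

/-- Lemma 6 and its Corollary: let `k` be odd. Then for no function
`f : ℕ → ℕ` and positive integer `c` can the family `Ψ'_{n,k}` (`n` even, `n ≥ k`) be
refuted in Resolution in size `f(k)·n^c`: for every `f` and `c > 0` there is an even
`n ≥ k` such that every Resolution refutation of `Ψ'_{n,k}` has size greater than
`f(k)·n^c`. Consequently, embedded `W[1]`-parameterized Resolution is not fpt-bounded. -/
theorem embedded_psi_not_fpt_bounded (k : ℕ) (hk : Odd k) (f : ℕ → ℕ) (c : ℕ)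
    (hc : 0 < c) :
    ∃ n : ℕ, Even n ∧ k ≤ n ∧
      ∀ π : ResRefutation (EmbeddedCNF (Psi n) n k), f k * n ^ c < π.size :=
  embedded_psi_not_fpt_bounded_general k hk f c
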